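/- Let k(x) = ∂_t K_t(x) viewed as a function of x ∈ ℝⁿ \ {0} with values in the Hilbert space H = L²((0,∞), t dt), where K_t(x) = t^{-n/2} e^{-π|x|²/t}. Then for every θ ∈ S^{n-1} and every ε > 0, the H-valued integral t ↦ ∫_ε^∞ r^{-d/2 - 1} k(θ/√r)(t) dr/r satisfies ∫_0^∞ |∫_{r > ε} r^{-d/2} k(θ/√r) dr/r|²(t) · t dt = C_d π^{-d}, where C_d = ∫_0^∞ r^{d-1} e^{-2r} dr; in particular the H-norm sup over ε > 0 is bounded by (C_d π^{-d})^{1/2}, uniformly in θ. -/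

import Mathlib

/-!
Since `‖θ / √r‖² = 1 / r`, the integrand `r ^ (-d/2) * k(θ / √r)(t) / r` is
`t ^ (-d/2 - 1)` times the `r`-derivative of `r ^ (-d/2) * exp (-(π / t) / r)`, which vanishes at
infinity; so the inner integral over `(ε, ∞)` is `-t ^ (-d/2 - 1) * ε ^ (-d/2) * exp (-π / (ε t))`.
Its square against `t dt` becomes, after `t ↦ 1 / t`, a Gamma integral equal to
`ε ^ (-d) (ε / 2π) ^ d Γ(d) = 2 ^ (-d) Γ(d) π ^ (-d)`, independent of `ε`.
-/

open MeasureTheory Real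

noncomputable def KD (d : ℕ) (t : ℝ) {n : ℕ} (x : EuclideanSpace ℝ (Fin n)) : ℝ :=
  t ^ (-(d : ℝ) / 2) * Real.exp (-π * ‖x‖ ^ 2 / t)

/-- `k(x)(t) = ∂ₜ Kₜ(x)`, an `H = L²((0,∞), t dt)`-valued kernel. -/
noncomputable def kker (d : ℕ) {n : ℕ} (x : EuclideanSpace ℝ (Fin n)) (t : ℝ) : ℝ :=
  deriv (fun s => KD d s x) t

open Filter Set Topology

lemma hasDerivAt_rpow_mul_exp_neg_div (p c : ℝ) {r : ℝ} (hr : 0 < r) :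
    HasDerivAt (fun s => s ^ p * exp (-c / s))
      (r ^ (p - 1) * ((p + c / r) * exp (-c / r))) r := by
  have hpow := hasDerivAt_rpow_const (p := p) (Or.inl hr.ne')
  have hquot : HasDerivAt (fun s => -c / s) (c / r ^ 2) r := by
    simpa only [div_eq_mul_inv, neg_mul, mul_neg, neg_neg] using
      (hasDerivAt_inv hr.ne').const_mul (-c)
  refine (hpow.mul hquot.exp).congr_deriv ?_
  rw [rpow_sub_one hr.ne']
  field_simp

lemma kker_eq {d n : ℕ} (x : EuclideanSpace ℝ (Fin n)) {t : ℝ} (ht : 0 < t) :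
    kker d x t = t ^ (-(d : ℝ) / 2 - 1)
      * ((-(d : ℝ) / 2 + π * ‖x‖ ^ 2 / t) * exp (-(π * ‖x‖ ^ 2) / t)) := by
  simp only [kker, KD, neg_mul]
  exact (hasDerivAt_rpow_mul_exp_neg_div _ _ ht).deriv

lemma abs_add_mul_exp_neg_le (p : ℝ) {s : ℝ} (hs : 0 ≤ s) :
    |(p + s) * exp (-s)| ≤ |p| + 1 := by
  have hexp : exp (-s) ≤ 1 := exp_le_one_iff.mpr (by linarith)
  have hsexp : s * exp (-s) ≤ 1 :=
    (mul_exp_neg_le_exp_neg_one s).trans (exp_le_one_iff.mpr (by norm_num))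
  calc |(p + s) * exp (-s)| ≤ |p| * exp (-s) + s * exp (-s) := by
        rw [abs_mul, abs_of_pos (exp_pos _)]
        nlinarith [abs_add_le p s, abs_of_nonneg hs, exp_pos (-s)]
    _ ≤ |p| + 1 := add_le_add (mul_le_of_le_one_right (abs_nonneg p) hexp) hsexp

lemma integral_Ioi_deriv_rpow_mul_exp_neg_div {p c ε : ℝ} (hp : p < 0) (hc : 0 ≤ c)
    (hε : 0 < ε) :
    ∫ r in Ioi ε, r ^ (p - 1) * ((p + c / r) * exp (-c / r)) = -(ε ^ p * exp (-c / ε)) := by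
  have hderiv : ∀ r ∈ Ici ε, HasDerivAt (fun s => s ^ p * exp (-c / s))
      (r ^ (p - 1) * ((p + c / r) * exp (-c / r))) r :=
    fun r hr => hasDerivAt_rpow_mul_exp_neg_div p c (hε.trans_le hr)
  have hint : IntegrableOn (fun r => r ^ (p - 1) * ((p + c / r) * exp (-c / r))) (Ioi ε) := by
    refine ((integrableOn_Ioi_rpow_of_lt (a := p - 1) (by linarith) hε).const_mul
      (|p| + 1)).mono' ?_ ?_
    · refine ContinuousOn.aestronglyMeasurable ?_ measurableSet_Ioi
      fun_prop (disch :=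
        intro r hr; first | exact (hε.trans hr).ne' | exact Or.inl (hε.trans hr).ne')
    filter_upwards [ae_restrict_mem measurableSet_Ioi] with r hr
    have hr0 : 0 < r := hε.trans hr
    rw [norm_mul, norm_of_nonneg (rpow_pos_of_pos hr0 _).le, mul_comm, neg_div]
    gcongr
    exact abs_add_mul_exp_neg_le p (div_nonneg hc hr0.le)
  have hlim : Tendsto (fun s => s ^ p * exp (-c / s)) atTop (𝓝 0) := by
    have hexp : Tendsto (fun s => exp (-c / s)) atTop (𝓝 1) := by
      simpa [Function.comp_def] using
        tendsto_exp_nhds_zero_nhds_one.comp (tendsto_const_nhds.div_atTop tendsto_id)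
    simpa using (tendsto_rpow_neg_atTop (neg_pos.mpr hp)).mul hexp
  rw [integral_Ioi_of_hasDerivAt_of_tendsto' hderiv hint hlim, zero_sub]

lemma integral_Ioi_rpow_mul_kker_inv_sqrt_smul {d n : ℕ} (hd : 0 < d)
    {θ : EuclideanSpace ℝ (Fin n)} (hθ : ‖θ‖ = 1) {ε t : ℝ} (hε : 0 < ε) (ht : 0 < t) :
    ∫ r in Ioi ε, r ^ (-(d : ℝ) / 2) * kker d ((√r)⁻¹ • θ) t / r
      = -(t ^ (-(d : ℝ) / 2 - 1) * (ε ^ (-(d : ℝ) / 2) * exp (-(π / t) / ε))) := by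
  have hp : -(d : ℝ) / 2 < 0 :=
    div_neg_of_neg_of_pos (neg_neg_of_pos (by exact_mod_cast hd)) two_pos
  rw [← mul_neg, ← integral_Ioi_deriv_rpow_mul_exp_neg_div hp (by positivity) hε,
    ← integral_const_mul]
  refine setIntegral_congr_fun measurableSet_Ioi fun r hr => ?_
  have hr0 : 0 < r := hε.trans hr
  have hnorm : ‖(√r)⁻¹ • θ‖ ^ 2 = r⁻¹ := by
    rw [norm_smul, hθ, mul_one, norm_inv, norm_of_nonneg (sqrt_nonneg r), inv_pow,
      sq_sqrt hr0.le]
  have harg : -(π * r⁻¹) / t = -(π / t) / r := by ring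
  rw [kker_eq _ ht, hnorm, harg, rpow_sub_one hr0.ne']
  ring

lemma integral_Ioi_rpow_neg_sub_one_mul_exp_neg_div {s a : ℝ} (hs : 0 < s) (ha : 0 < a) :
    ∫ t in Ioi 0, t ^ (-s - 1) * exp (-a / t) = (1 / a) ^ s * Gamma s := by
  rw [← integral_rpow_mul_exp_neg_mul_Ioi hs ha,
    ← integral_comp_rpow_Ioi (fun y => y ^ (s - 1) * exp (-(a * y))) (p := -1) (by norm_num)]
  refine setIntegral_congr_fun measurableSet_Ioi fun t ht => ?_
  have ht0 : 0 < t := ht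
  simp only [smul_eq_mul, abs_neg, abs_one, one_mul, rpow_neg_one]
  rw [inv_rpow ht0.le, ← rpow_neg ht0.le, ← mul_assoc, ← rpow_add ht0,
    show -1 - 1 + -(s - 1) = -s - 1 by ring, neg_div, div_eq_mul_inv]

lemma integral_Ioi_sq_rpow_mul_exp_neg_div_mul {s ε : ℝ} (hs : 0 < s) (hε : 0 < ε) :
    ∫ t in Ioi 0, (-(t ^ (-s / 2 - 1) * (ε ^ (-s / 2) * exp (-(π / t) / ε)))) ^ 2 * t
      = (1 / 2) ^ s * Gamma s * π ^ (-s) := by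
  have hsq : ∀ t ∈ Ioi (0 : ℝ),
      (-(t ^ (-s / 2 - 1) * (ε ^ (-s / 2) * exp (-(π / t) / ε)))) ^ 2 * t
        = ε ^ (-s) * (t ^ (-s - 1) * exp (-(2 * π / ε) / t)) := by
    intro t ht
    have ht0 : 0 < t := ht
    have htpow : t ^ (-s - 1) = (t ^ (-s / 2 - 1)) ^ 2 * t := by
      rw [← rpow_natCast, ← rpow_mul ht0.le, ← rpow_add_one ht0.ne']
      ring_nf
    have hεpow : ε ^ (-s) = (ε ^ (-s / 2)) ^ 2 := by
      rw [← rpow_natCast, ← rpow_mul hε.le]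
      ring_nf
    have hexp : exp (-(2 * π / ε) / t) = exp (-(π / t) / ε) ^ 2 := by
      rw [sq, ← exp_add]
      ring_nf
    rw [htpow, hεpow, hexp]
    ring
  rw [setIntegral_congr_fun measurableSet_Ioi hsq, integral_const_mul,
    integral_Ioi_rpow_neg_sub_one_mul_exp_neg_div hs (by positivity),
    show 1 / (2 * π / ε) = 1 / 2 * π⁻¹ * ε by field_simp, mul_rpow (by positivity) hε.le,
    mul_rpow (by positivity) (by positivity), inv_rpow pi_pos.le, rpow_neg hε.le,
    rpow_neg pi_pos.le]
  field_simp

theorem stmt_19_general (n d : ℕ) (hd1 : 1 ≤ d)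
    (θ : EuclideanSpace ℝ (Fin n)) (hθ : ‖θ‖ = 1) :
    (∀ ε : ℝ, 0 < ε →
        ∫ t in Set.Ioi (0 : ℝ),
            (∫ r in Set.Ioi ε, r ^ (-(d : ℝ) / 2) * kker d ((Real.sqrt r)⁻¹ • θ) t / r) ^ 2 * t
          = (∫ r in Set.Ioi (0 : ℝ), r ^ ((d : ℝ) - 1) * Real.exp (-2 * r)) * π ^ (-(d : ℝ))) ∧
      ∀ ε : ℝ, 0 < ε →
        Real.sqrt (∫ t in Set.Ioi (0 : ℝ),
            (∫ r in Set.Ioi ε, r ^ (-(d : ℝ) / 2) * kker d ((Real.sqrt r)⁻¹ • θ) t / r) ^ 2 * t)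
          ≤ ((∫ r in Set.Ioi (0 : ℝ), r ^ ((d : ℝ) - 1) * Real.exp (-2 * r)) * π ^ (-(d : ℝ)))
              ^ ((1 : ℝ) / 2) := by
  have hd : (0 : ℝ) < d := by exact_mod_cast hd1
  have hnorm_sq : ∀ ε : ℝ, 0 < ε →
      ∫ t in Ioi (0 : ℝ),
          (∫ r in Ioi ε, r ^ (-(d : ℝ) / 2) * kker d ((√r)⁻¹ • θ) t / r) ^ 2 * t
        = (∫ r in Ioi (0 : ℝ), r ^ ((d : ℝ) - 1) * exp (-2 * r)) * π ^ (-(d : ℝ)) := by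
    intro ε hε
    rw [setIntegral_congr_fun measurableSet_Ioi fun t ht => by
        rw [integral_Ioi_rpow_mul_kker_inv_sqrt_smul hd1 hθ hε ht],
      integral_Ioi_sq_rpow_mul_exp_neg_div_mul hd hε]
    simp only [neg_mul, integral_rpow_mul_exp_neg_mul_Ioi hd two_pos]
  exact ⟨hnorm_sq, fun ε hε => by rw [hnorm_sq ε hε, sqrt_eq_rpow]⟩

/-- For unit `θ` and every `ε > 0`, the truncated-singular-integral computation
`∫₀^∞ |∫_{r>ε} r^{-d/2} k(θ/√r) dr/r|²(t) · t dt = C_d π^{-d}` holds, with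
`C_d = ∫₀^∞ r^{d-1} e^{-2r} dr`; in particular the `H`-norm is bounded by
`(C_d π^{-d})^{1/2}` uniformly in `ε` and `θ`. -/
theorem stmt_19 (n d : ℕ) (hd1 : 1 ≤ d) (hdn : d ≤ n)
    (θ : EuclideanSpace ℝ (Fin n)) (hθ : ‖θ‖ = 1) :
    (∀ ε : ℝ, 0 < ε →
        ∫ t in Set.Ioi (0 : ℝ),
            (∫ r in Set.Ioi ε, r ^ (-(d : ℝ) / 2) * kker d ((Real.sqrt r)⁻¹ • θ) t / r) ^ 2 * t
          = (∫ r in Set.Ioi (0 : ℝ), r ^ ((d : ℝ) - 1) * Real.exp (-2 * r)) * π ^ (-(d : ℝ))) ∧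
      ∀ ε : ℝ, 0 < ε →
        Real.sqrt (∫ t in Set.Ioi (0 : ℝ),
            (∫ r in Set.Ioi ε, r ^ (-(d : ℝ) / 2) * kker d ((Real.sqrt r)⁻¹ • θ) t / r) ^ 2 * t)
          ≤ ((∫ r in Set.Ioi (0 : ℝ), r ^ ((d : ℝ) - 1) * Real.exp (-2 * r)) * π ^ (-(d : ℝ)))
              ^ ((1 : ℝ) / 2) :=
  stmt_19_general n d hd1 θ hθ
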